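/- arXiv:math/0611133 — 2 statements merged into one kernel-verified Lean document; each statement's English description precedes it below -/
import Mathlib

section
/- For any classifier g = 2·1_C − 1 with μ(C) = u₀, the excess risk admits the representation L(g) − L(g*_{u₀}) = 2·E[ |η(X) − Q(η,1−u₀)| · 1_{C*_{u₀} Δ C}(X) ], where Δ denotes symmetric difference. -/
/-!
Write `μ = P.map X`. Since `Y = ±1` and `P(X ∈ A, Y = 1) = ∫_A η dμ`, the error of the classifier
built from `A` is `∫ η dμ + μ(A) - 2 ∫_A η dμ`. For two sets of equal mass the difference of errors
is therefore `2 (∫_{C*} η - ∫_C η)`, and because the masses agree `η` may be replaced by `η - q`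
there. Cutting both sets along their intersection leaves `∫_{C* \ C} (η - q) - ∫_{C \ C*} (η - q)`,
and `η - q` is `≥ 0` on `C* = {q ≤ η}` and `< 0` off it, so both terms are integrals of `|η - q|`.
-/

open MeasureTheory Set

namespace LocalRanking

variable {Ω 𝒳 : Type*} [MeasurableSpace Ω] [MeasurableSpace 𝒳]

/-- The generalized-inverse `v`-quantile of a distribution `μ` on `ℝ`:
`Q(μ, v) = inf {t : F(t) ≥ v}`. -/
noncomputable def quantile (μ : Measure ℝ) (v : ℝ) : ℝ :=
  sInf {t : ℝ | v ≤ (μ (Iic t)).toReal}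

/-- Classification error `P(Y ≠ g(X))` of the classifier `g = 2·1_C − 1` built from a set `C`. -/
noncomputable def errSet (P : Measure Ω) (X : Ω → 𝒳) (Y : Ω → ℝ) (C : Set 𝒳) : ℝ :=
  (P {ω | (Y ω = 1 ∧ X ω ∉ C) ∨ (Y ω = -1 ∧ X ω ∈ C)}).toReal

section SetIntegral

variable {μ : Measure 𝒳} {f : 𝒳 → ℝ} {s t : Set 𝒳}

theorem setIntegral_sub_setIntegral_eq_sdiff (hs : MeasurableSet s) (ht : MeasurableSet t)
    (hf : Integrable f μ) :
    ∫ x in s, f x ∂μ - ∫ x in t, f x ∂μ = ∫ x in s \ t, f x ∂μ - ∫ x in t \ s, f x ∂μ := by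
  have hs_split := integral_inter_add_sdiff ht (hf.integrableOn (s := s))
  have ht_split := integral_inter_add_sdiff hs (hf.integrableOn (s := t))
  rw [inter_comm] at ht_split
  linarith

theorem setIntegral_superlevel_sub_setIntegral_eq_setIntegral_symmDiff_abs [IsFiniteMeasure μ]
    (hf : Measurable f) (hfi : Integrable f μ) (q : ℝ) (ht : MeasurableSet t)
    (hmass : μ.real {x | q ≤ f x} = μ.real t) :
    ∫ x in {x | q ≤ f x}, f x ∂μ - ∫ x in t, f x ∂μ =
      ∫ x in symmDiff {x | q ≤ f x} t, |f x - q| ∂μ := by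
  set s := {x | q ≤ f x}
  have hs : MeasurableSet s := measurableSet_le measurable_const hf
  have hg : Integrable (fun x => f x - q) μ := hfi.sub (integrable_const q)
  have shift : ∫ x in s, f x ∂μ - ∫ x in t, f x ∂μ =
      ∫ x in s, (f x - q) ∂μ - ∫ x in t, (f x - q) ∂μ := by
    rw [integral_sub hfi.integrableOn (integrable_const q).integrableOn,
      integral_sub hfi.integrableOn (integrable_const q).integrableOn,
      setIntegral_const, setIntegral_const, hmass]
    ring
  have abs_on_s_sdiff : ∫ x in s \ t, |f x - q| ∂μ = ∫ x in s \ t, (f x - q) ∂μ :=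
    setIntegral_congr_fun (hs.diff ht) fun x hx => abs_of_nonneg (sub_nonneg.2 hx.1)
  have abs_on_t_sdiff : ∫ x in t \ s, |f x - q| ∂μ = -∫ x in t \ s, (f x - q) ∂μ := by
    rw [← integral_neg]
    exact setIntegral_congr_fun (ht.diff hs) fun x hx => abs_of_neg (sub_neg.2 (not_le.1 hx.2))
  rw [shift, setIntegral_sub_setIntegral_eq_sdiff hs ht hg, Set.symmDiff_def,
    setIntegral_union disjoint_sdiff_sdiff (ht.diff hs) hg.abs.integrableOn hg.abs.integrableOn,
    abs_on_s_sdiff, abs_on_t_sdiff, sub_eq_add_neg]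

end SetIntegral

section Classification

variable {P : Measure Ω} [IsFiniteMeasure P] {X : Ω → 𝒳} {Y : Ω → ℝ} {A : Set 𝒳}

theorem measureReal_label_neg_one_eq (hX : Measurable X) (hY : Measurable Y)
    (hYval : ∀ ω, Y ω = 1 ∨ Y ω = -1) (hA : MeasurableSet A) :
    P.real {ω | Y ω = -1 ∧ X ω ∈ A} = (P.map X).real A - P.real {ω | X ω ∈ A ∧ Y ω = 1} := by
  have hsplit :=
    measureReal_inter_add_sdiff (μ := P) (s := X ⁻¹' A) (hY (measurableSet_singleton 1))
  have hsdiff : X ⁻¹' A \ Y ⁻¹' {1} = {ω | Y ω = -1 ∧ X ω ∈ A} := by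
    ext ω
    rcases hYval ω with h | h <;> norm_num [h, and_comm]
  rw [hsdiff] at hsplit
  rw [map_measureReal_apply hX hA, ← hsplit]
  exact (add_sub_cancel_left _ _).symm

theorem errSet_eq {η : 𝒳 → ℝ} (hX : Measurable X) (hY : Measurable Y)
    (hYval : ∀ ω, Y ω = 1 ∨ Y ω = -1) (hηi : Integrable η (P.map X))
    (hη : ∀ A : Set 𝒳, MeasurableSet A →
      P.real {ω | X ω ∈ A ∧ Y ω = 1} = ∫ x in A, η x ∂(P.map X))
    (hA : MeasurableSet A) :
    errSet P X Y A = ∫ x, η x ∂(P.map X) + (P.map X).real A - 2 * ∫ x in A, η x ∂(P.map X) := by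
  have hunion : {ω | (Y ω = 1 ∧ X ω ∉ A) ∨ (Y ω = -1 ∧ X ω ∈ A)} =
      {ω | X ω ∈ Aᶜ ∧ Y ω = 1} ∪ {ω | Y ω = -1 ∧ X ω ∈ A} := by
    ext ω
    simp only [mem_union, mem_ofPred_eq, mem_compl_iff]
    tauto
  have hdisj : Disjoint {ω | X ω ∈ Aᶜ ∧ Y ω = 1} {ω | Y ω = -1 ∧ X ω ∈ A} :=
    disjoint_left.2 fun ω h₁ h₂ => by norm_num [h₁.2] at h₂
  have hmeas : MeasurableSet {ω | Y ω = -1 ∧ X ω ∈ A} :=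
    (hY (measurableSet_singleton _)).inter (hX hA)
  have hcompl := integral_add_compl hA hηi
  rw [errSet, ← measureReal_def, hunion, measureReal_union hdisj hmeas, hη _ hA.compl,
    measureReal_label_neg_one_eq hX hY hYval hA, hη _ hA]
  linarith

end Classification

theorem excess_risk_representation_general
    (P : Measure Ω) [IsProbabilityMeasure P]
    (X : Ω → 𝒳) (Y : Ω → ℝ) (η : 𝒳 → ℝ)
    (hX : Measurable X) (hY : Measurable Y) (hηm : Measurable η)
    (hYval : ∀ ω, Y ω = 1 ∨ Y ω = -1)
    (hηbd : ∀ x, η x ∈ Icc (0 : ℝ) 1)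
    (hη : ∀ A : Set 𝒳, MeasurableSet A →
      (P {ω | X ω ∈ A ∧ Y ω = 1}).toReal = ∫ x in A, η x ∂(P.map X))
    (u₀ q : ℝ)
    (hmass_star : ((P.map X) {x | q ≤ η x}).toReal = u₀)
    (C : Set 𝒳) (hC : MeasurableSet C)
    (hmass : ((P.map X) C).toReal = u₀) :
    errSet P X Y C - errSet P X Y {x | q ≤ η x} =
      2 * ∫ x in symmDiff {x | q ≤ η x} C, |η x - q| ∂(P.map X) := by
  have hηi : Integrable η (P.map X) :=
    Integrable.of_bound hηm.aestronglyMeasurable 1 (ae_of_all _ fun x =>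
      abs_le.2 ⟨by linarith [(hηbd x).1], (hηbd x).2⟩)
  have hsuper := setIntegral_superlevel_sub_setIntegral_eq_setIntegral_symmDiff_abs hηm hηi q hC
    (hmass_star.trans hmass.symm)
  rw [errSet_eq hX hY hYval hηi hη hC,
    errSet_eq hX hY hYval hηi hη (measurableSet_le measurable_const hηm), ← hsuper]
  simp only [measureReal_def, hmass, hmass_star]
  ring

/-- For any classifier `g = 2·1_C − 1` with `μ(C) = u₀`, the excess risk is
`L(g) − L(g*_{u₀}) = 2·E[|η(X) − Q(η,1−u₀)|·1_{C*_{u₀} Δ C}(X)]`. -/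
theorem excess_risk_representation
    (P : Measure Ω) [IsProbabilityMeasure P]
    (X : Ω → 𝒳) (Y : Ω → ℝ) (η : 𝒳 → ℝ)
    (hX : Measurable X) (hY : Measurable Y) (hηm : Measurable η)
    (hYval : ∀ ω, Y ω = 1 ∨ Y ω = -1)
    (hηbd : ∀ x, η x ∈ Icc (0 : ℝ) 1)
    (hη : ∀ A : Set 𝒳, MeasurableSet A →
      (P {ω | X ω ∈ A ∧ Y ω = 1}).toReal = ∫ x in A, η x ∂(P.map X))
    (u₀ q : ℝ) (hu₀ : u₀ ∈ Ioo (0 : ℝ) 1)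
    (hq : q = quantile (P.map fun ω => η (X ω)) (1 - u₀))
    (hmass_star : ((P.map X) {x | q ≤ η x}).toReal = u₀)
    (C : Set 𝒳) (hC : MeasurableSet C)
    (hmass : ((P.map X) C).toReal = u₀) :
    errSet P X Y C - errSet P X Y {x | q ≤ η x} =
      2 * ∫ x in symmDiff {x | q ≤ η x} C, |η x - q| ∂(P.map X) :=
  excess_risk_representation_general P X Y η hX hY hηm hYval hηbd hη u₀ q hmass_star C hC hmass

end LocalRanking
end

section
/- For any scoring function s and any u ∈ (0,1), the true positive rate at rate u is maximized by the posterior: β(s,u) ≤ β(η,u), where β(s,u) = P(s(X) ≥ Q(s,1−u) | Y=+1). Moreover, equality holds only if C_{s,u} = C*_u up to μ-null sets. -/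
/-! Neyman–Pearson: `β(s,u)` is `∫ η` over `C_{s,u}` divided by `p`, and `C*_u = {q ≤ η}` is a
superlevel set of `η` with the same mass `u`. Trading `C_{s,u} \ C*_u`, where `η < q`, for
`C*_u \ C_{s,u}`, where `q ≤ η`, two sets of equal mass, can only increase `∫ η`; if it does
not, the first set carries no mass because `η < q` strictly on it, hence neither does the
second. -/

open MeasureTheory Set

namespace LocalRanking

variable {Ω 𝒳 : Type*} [MeasurableSpace Ω] [MeasurableSpace 𝒳]

/-- The set `C_{s,u} = {x : s(x) ≥ Q(s, 1−u)}` of top instances at rate `u` for score `s`. -/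
noncomputable def topSet (P : Measure Ω) (X : Ω → 𝒳) (s : 𝒳 → ℝ) (u : ℝ) : Set 𝒳 :=
  {x | quantile (P.map fun ω => s (X ω)) (1 - u) ≤ s x}

/-- True positive rate `β(s,u) = P(X ∈ C_{s,u} | Y=+1)`. -/
noncomputable def betaS (P : Measure Ω) (X : Ω → 𝒳) (Y : Ω → ℝ) (s : 𝒳 → ℝ) (u : ℝ) : ℝ :=
  (P {ω | X ω ∈ topSet P X s u ∧ Y ω = 1}).toReal / (P {ω | Y ω = 1}).toReal

/-- False positive rate `α(s,u) = P(X ∈ C_{s,u} | Y=−1)`. -/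
noncomputable def alphaS (P : Measure Ω) (X : Ω → 𝒳) (Y : Ω → ℝ) (s : 𝒳 → ℝ) (u : ℝ) : ℝ :=
  (P {ω | X ω ∈ topSet P X s u ∧ Y ω = -1}).toReal / (P {ω | Y ω = -1}).toReal

section NeymanPearson

variable {μ : Measure 𝒳} [IsFiniteMeasure μ] {f : 𝒳 → ℝ} {A : Set 𝒳} {q : ℝ}

theorem setIntegral_superlevel_sub_setIntegral (hf : Integrable f μ) (hA : MeasurableSet A)
    (hB : MeasurableSet {x | q ≤ f x}) (hmass : μ A = μ {x | q ≤ f x}) :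
    ∫ x in {x | q ≤ f x}, f x ∂μ - ∫ x in A, f x ∂μ =
      ∫ x in {x | q ≤ f x} \ A, (f x - q) ∂μ + ∫ x in A \ {x | q ≤ f x}, (q - f x) ∂μ := by
  set B := {x | q ≤ f x}
  have hsdiff : μ.real (A \ B) = μ.real (B \ A) := congrArg ENNReal.toReal <|
    measure_sdiff_symm hA.nullMeasurableSet hB.nullMeasurableSet hmass (measure_ne_top _ _)
  have hsplitA := integral_inter_add_sdiff (s := A) hB hf.integrableOn
  have hsplitB := integral_inter_add_sdiff (s := B) hA hf.integrableOn
  rw [inter_comm] at hsplitB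
  rw [integral_sub hf.integrableOn (integrable_const q), integral_sub (integrable_const q)
    hf.integrableOn, setIntegral_const, setIntegral_const, smul_eq_mul, smul_eq_mul, hsdiff]
  linarith

theorem setIntegral_le_setIntegral_superlevel (hf : Integrable f μ) (hA : MeasurableSet A)
    (hB : MeasurableSet {x | q ≤ f x}) (hmass : μ A = μ {x | q ≤ f x}) :
    ∫ x in A, f x ∂μ ≤ ∫ x in {x | q ≤ f x}, f x ∂μ := by
  have hgain := setIntegral_superlevel_sub_setIntegral hf hA hB hmass
  have hB_sdiff : 0 ≤ ∫ x in {x | q ≤ f x} \ A, (f x - q) ∂μ :=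
    setIntegral_nonneg (hB.diff hA) fun x hx => sub_nonneg.2 hx.1
  have hA_sdiff : 0 ≤ ∫ x in A \ {x | q ≤ f x}, (q - f x) ∂μ :=
    setIntegral_nonneg (hA.diff hB) fun x hx => sub_nonneg.2 (not_le.1 hx.2).le
  linarith

theorem measure_symmDiff_superlevel_eq_zero (hf : Integrable f μ) (hA : MeasurableSet A)
    (hB : MeasurableSet {x | q ≤ f x}) (hmass : μ A = μ {x | q ≤ f x})
    (heq : ∫ x in A, f x ∂μ = ∫ x in {x | q ≤ f x}, f x ∂μ) :
    μ (symmDiff A {x | q ≤ f x}) = 0 := by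
  set B := {x | q ≤ f x}
  have hgain := setIntegral_superlevel_sub_setIntegral hf hA hB hmass
  have hB_sdiff : 0 ≤ ∫ x in B \ A, (f x - q) ∂μ :=
    setIntegral_nonneg (hB.diff hA) fun x hx => sub_nonneg.2 hx.1
  have hpos : ∀ x ∈ A \ B, 0 < q - f x := fun x hx => sub_pos.2 (not_le.1 hx.2)
  have hAB : μ (A \ B) = 0 := by
    by_contra hne
    have hsupport : Function.support (fun x => q - f x) ∩ (A \ B) = A \ B :=
      inter_eq_right.2 fun x hx => (hpos x hx).ne'
    have hlt : 0 < ∫ x in A \ B, (q - f x) ∂μ := by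
      rw [setIntegral_pos_iff_support_of_nonneg_ae
        ((ae_restrict_iff' (hA.diff hB)).2 (ae_of_all _ fun x hx => (hpos x hx).le))
        ((integrable_const q).sub hf).integrableOn, hsupport]
      exact pos_iff_ne_zero.2 hne
    linarith
  have hBA : μ (B \ A) = 0 := by
    rw [← measure_sdiff_symm hA.nullMeasurableSet hB.nullMeasurableSet hmass
      (measure_ne_top _ _), hAB]
  exact measure_union_null hAB hBA

end NeymanPearson

theorem measurableSet_topSet (P : Measure Ω) (X : Ω → 𝒳) {s : 𝒳 → ℝ} (hs : Measurable s)
    (u : ℝ) : MeasurableSet (topSet P X s u) :=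
  measurableSet_le measurable_const hs

theorem betaS_eq_setIntegral_div {P : Measure Ω} {X : Ω → 𝒳} {Y : Ω → ℝ} {η : 𝒳 → ℝ}
    (hη : ∀ A : Set 𝒳, MeasurableSet A →
      (P {ω | X ω ∈ A ∧ Y ω = 1}).toReal = ∫ x in A, η x ∂(P.map X))
    {s : 𝒳 → ℝ} (hs : Measurable s) (u : ℝ) :
    betaS P X Y s u = (∫ x in topSet P X s u, η x ∂(P.map X)) / (P {ω | Y ω = 1}).toReal := by
  rw [betaS, hη _ (measurableSet_topSet P X hs u)]

theorem posterior_maximizes_true_positive_rate_general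
    (P : Measure Ω) [IsProbabilityMeasure P]
    (X : Ω → 𝒳) (Y : Ω → ℝ) (η : 𝒳 → ℝ)
    (hηm : Measurable η)
    (hηbd : ∀ x, η x ∈ Icc (0 : ℝ) 1)
    (hη : ∀ A : Set 𝒳, MeasurableSet A →
      (P {ω | X ω ∈ A ∧ Y ω = 1}).toReal = ∫ x in A, η x ∂(P.map X))
    (p : ℝ) (hp : p = (P {ω | Y ω = 1}).toReal) (hp01 : p ∈ Ioo (0 : ℝ) 1)
    (u : ℝ)
    (s : 𝒳 → ℝ) (hs : Measurable s)
    (hmass_s : ((P.map X) (topSet P X s u)).toReal = u)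
    (hmass_η : ((P.map X) (topSet P X η u)).toReal = u) :
    betaS P X Y s u ≤ betaS P X Y η u ∧
      (betaS P X Y s u = betaS P X Y η u →
        (P.map X) (symmDiff (topSet P X s u) (topSet P X η u)) = 0) := by
  have hηint : Integrable η (P.map X) :=
    .of_bound hηm.aestronglyMeasurable 1 <| ae_of_all _ fun x =>
      abs_le.2 ⟨by linarith [(hηbd x).1], (hηbd x).2⟩
  have hmass : P.map X (topSet P X s u) = P.map X (topSet P X η u) :=
    (ENNReal.toReal_eq_toReal_iff' (measure_ne_top _ _) (measure_ne_top _ _)).1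
      (hmass_s.trans hmass_η.symm)
  have hA := measurableSet_topSet P X hs u
  have hB := measurableSet_topSet P X hηm u
  rw [betaS_eq_setIntegral_div hη hs, betaS_eq_setIntegral_div hη hηm, ← hp]
  refine ⟨div_le_div_of_nonneg_right
    (setIntegral_le_setIntegral_superlevel hηint hA hB hmass) hp01.1.le, fun heq => ?_⟩
  exact measure_symmDiff_superlevel_eq_zero hηint hA hB hmass
    ((div_left_inj' hp01.1.ne').1 heq)

/-- The true positive rate at rate `u` is maximized by the posterior:
`β(s,u) ≤ β(η,u)`, with equality only if `C_{s,u} = C*_u` up to `μ`-null sets. -/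
theorem posterior_maximizes_true_positive_rate
    (P : Measure Ω) [IsProbabilityMeasure P]
    (X : Ω → 𝒳) (Y : Ω → ℝ) (η : 𝒳 → ℝ)
    (hX : Measurable X) (hY : Measurable Y) (hηm : Measurable η)
    (hYval : ∀ ω, Y ω = 1 ∨ Y ω = -1)
    (hηbd : ∀ x, η x ∈ Icc (0 : ℝ) 1)
    (hη : ∀ A : Set 𝒳, MeasurableSet A →
      (P {ω | X ω ∈ A ∧ Y ω = 1}).toReal = ∫ x in A, η x ∂(P.map X))
    (p : ℝ) (hp : p = (P {ω | Y ω = 1}).toReal) (hp01 : p ∈ Ioo (0 : ℝ) 1)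
    (u : ℝ) (hu : u ∈ Ioo (0 : ℝ) 1)
    (s : 𝒳 → ℝ) (hs : Measurable s)
    (hmass_s : ((P.map X) (topSet P X s u)).toReal = u)
    (hmass_η : ((P.map X) (topSet P X η u)).toReal = u) :
    betaS P X Y s u ≤ betaS P X Y η u ∧
      (betaS P X Y s u = betaS P X Y η u →
        (P.map X) (symmDiff (topSet P X s u) (topSet P X η u)) = 0) :=
  posterior_maximizes_true_positive_rate_general P X Y η hηm hηbd hη p hp hp01 u s hs hmass_s
    hmass_η

end LocalRanking
end
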